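/- Let $G$ be a formal potential with invertible Hessian metric $G_{ij} = \partial_i \partial_j G$ satisfying the WDVV equations, and define the quantum multiplication operators $A_i := (e_i *)$ with matrix entries $(A_i)_j^k = \sum_l G_{ijl} G^{lk}$. Then for every scalar $q \neq 1$, the connection $\nabla_q := d - \frac{1}{1-q} \sum_i A_i \, dt_i$ is flat, i.e. its curvature vanishes: $\partial_i A_j = \partial_j A_i$ and $[A_i, A_j] = 0$ together with $\frac{1}{1-q}(\partial_i A_j - \partial_j A_i) = \frac{1}{(1-q)^2}[A_i, A_j]$ for all $i, j$. -/
import Mathlib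


namespace QKStmt11

/-- **Flatness of the connections `∇_q`** (part 2 of the Proposition in
Section 5.2 of "Quantum K-Theory I"): for a potential `G` with invertible
Hessian metric `G_{ij} = ∂ᵢ∂ⱼG` satisfying the WDVV equations, the quantum
multiplication operators `Aᵢ = (eᵢ*)`, `(Aᵢ)ⱼᵏ = ∑ₗ G_{ijl}G^{lk}`, satisfy
`∂ᵢAⱼ = ∂ⱼAᵢ` and `[Aᵢ, Aⱼ] = 0`; hence for every `q ≠ 1` the connection
`∇_q = d - (1-q)^{-1} ∑ᵢ Aᵢ dtᵢ` is flat: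
`(1-q)^{-1}(∂ᵢAⱼ - ∂ⱼAᵢ) = (1-q)^{-2}[Aᵢ, Aⱼ]`. -/
theorem stmt_11 (A : Type) [CommRing A] [Algebra ℚ A] (N : ℕ)
    (D : Fin (N + 1) → Derivation ℚ A A)
    (hD : ∀ i j a, D i (D j a) = D j (D i a))
    (G : A) (Ginv : Fin (N + 1) → Fin (N + 1) → A)
    (hGinv : ∀ i j, ∑ l, D i (D l G) * Ginv l j = if i = j then 1 else 0)
    (hGinv' : ∀ i j, ∑ l, Ginv i l * D l (D j G) = if i = j then 1 else 0)
    (hWDVV : ∀ i j k l,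
      ∑ μ, ∑ ν, D i (D j (D μ G)) * Ginv μ ν * D ν (D k (D l G))
        = ∑ μ, ∑ ν, D i (D k (D μ G)) * Ginv μ ν * D ν (D j (D l G)))
    (Amat : Fin (N + 1) → Matrix (Fin (N + 1)) (Fin (N + 1)) A)
    (hAmat : ∀ i j k, Amat i j k = ∑ l, D i (D j (D l G)) * Ginv l k) :
    ∀ i j,
      (Amat j).map (D i) = (Amat i).map (D j) ∧
      Amat i * Amat j = Amat j * Amat i ∧
      (∀ q u : A, (1 - q) * u = 1 →
        u • ((Amat j).map (D i) - (Amat i).map (D j))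
          = (u * u) • (Amat i * Amat j - Amat j * Amat i)) := by
  -- derivative of the inverse metric, half-contracted form
  have h1 : ∀ i l m, ∑ a, D i (Ginv l a) * D a (D m G)
      = -∑ a, Ginv l a * D i (D a (D m G)) := by
    intro i l m
    have h := congrArg (D i) (hGinv' l m)
    simp only [map_sum, Derivation.leibniz, smul_eq_mul] at h
    have h0 : D i (if l = m then (1:A) else 0) = 0 := by split <;> simp
    rw [h0] at h
    have h' : ∑ a, Ginv l a * D i (D a (D m G)) + ∑ a, D i (Ginv l a) * D a (D m G) = 0 := by
      rw [← Finset.sum_add_distrib, ← h]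
      exact Finset.sum_congr rfl fun a _ => by ring
    linear_combination h'
  -- derivative of the inverse metric
  have hdGinv : ∀ i l k, D i (Ginv l k)
      = -∑ b, (∑ a, Ginv l a * D i (D a (D b G))) * Ginv b k := by
    intro i l k
    have e1 : D i (Ginv l k) = ∑ a, D i (Ginv l a) * (if a = k then (1:A) else 0) := by
      simp
    rw [e1]
    simp_rw [← hGinv]
    calc ∑ a, D i (Ginv l a) * ∑ b, D a (D b G) * Ginv b k
        = ∑ b, (∑ a, D i (Ginv l a) * D a (D b G)) * Ginv b k := by
          simp_rw [Finset.mul_sum, Finset.sum_mul]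
          rw [Finset.sum_comm]
          exact Finset.sum_congr rfl fun b _ => Finset.sum_congr rfl fun a _ => by ring
      _ = -∑ b, (∑ a, Ginv l a * D i (D a (D b G))) * Ginv b k := by
          simp_rw [h1]
          rw [← Finset.sum_neg_distrib]
          exact Finset.sum_congr rfl fun b _ => by ring
  -- the key WDVV consequence
  have key : ∀ i j k b,
      ∑ l, ∑ a, D i (D k (D l G)) * Ginv l a * D j (D a (D b G))
        = ∑ l, ∑ a, D j (D k (D l G)) * Ginv l a * D i (D a (D b G)) := by
    intro i j k b
    calc ∑ l, ∑ a, D i (D k (D l G)) * Ginv l a * D j (D a (D b G))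
        = ∑ l, ∑ a, D k (D i (D l G)) * Ginv l a * D a (D j (D b G)) :=
          Finset.sum_congr rfl fun l _ => Finset.sum_congr rfl fun a _ => by
            rw [hD i k (D l G), hD j a (D b G)]
      _ = ∑ l, ∑ a, D k (D j (D l G)) * Ginv l a * D a (D i (D b G)) := hWDVV k i j b
      _ = ∑ l, ∑ a, D j (D k (D l G)) * Ginv l a * D i (D a (D b G)) :=
          Finset.sum_congr rfl fun l _ => Finset.sum_congr rfl fun a _ => by
            rw [hD k j (D l G), hD a i (D b G)]
  -- expansion of the entrywise derivative of Amat
  have expand1 : ∀ i j k m, D i (Amat j k m)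
      = (∑ l, D i (D j (D k (D l G))) * Ginv l m)
        - ∑ b, (∑ l, ∑ a, D j (D k (D l G)) * Ginv l a * D i (D a (D b G))) * Ginv b m := by
    intro i j k m
    rw [hAmat, map_sum]
    simp only [Derivation.leibniz, smul_eq_mul]
    simp_rw [hdGinv]
    rw [Finset.sum_add_distrib, add_comm, sub_eq_add_neg]
    congr 1
    · exact Finset.sum_congr rfl fun l _ => by ring
    · calc ∑ l, D j (D k (D l G)) * -∑ b, (∑ a, Ginv l a * D i (D a (D b G))) * Ginv b m
          = -∑ l, ∑ b, (∑ a, D j (D k (D l G)) * (Ginv l a * D i (D a (D b G)))) * Ginv b m := by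
            rw [← Finset.sum_neg_distrib]
            refine Finset.sum_congr rfl fun l _ => ?_
            rw [mul_neg]
            congr 1
            rw [Finset.mul_sum]
            refine Finset.sum_congr rfl fun b _ => ?_
            rw [← mul_assoc, Finset.mul_sum]
        _ = -∑ b, (∑ l, ∑ a, D j (D k (D l G)) * Ginv l a * D i (D a (D b G))) * Ginv b m := by
            rw [Finset.sum_comm]
            congr 1
            refine Finset.sum_congr rfl fun b _ => ?_
            rw [Finset.sum_mul]
            refine Finset.sum_congr rfl fun l _ => ?_
            rw [Finset.sum_mul, Finset.sum_mul]
            exact Finset.sum_congr rfl fun a _ => by ring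
  -- expansion of the product
  have expand2 : ∀ i j k m, (Amat i * Amat j) k m
      = ∑ b, (∑ l, ∑ a, D i (D k (D l G)) * Ginv l a * D j (D a (D b G))) * Ginv b m := by
    intro i j k m
    rw [Matrix.mul_apply]
    simp_rw [hAmat]
    calc ∑ x, (∑ l, D i (D k (D l G)) * Ginv l x) * ∑ l, D j (D x (D l G)) * Ginv l m
        = ∑ x, ∑ b, (∑ l, D i (D k (D l G)) * Ginv l x * D j (D x (D b G))) * Ginv b m := by
          refine Finset.sum_congr rfl fun x _ => ?_
          rw [Finset.mul_sum]
          refine Finset.sum_congr rfl fun b _ => ?_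
          rw [Finset.sum_mul, Finset.sum_mul]
          exact Finset.sum_congr rfl fun l _ => by ring
      _ = ∑ b, (∑ l, ∑ a, D i (D k (D l G)) * Ginv l a * D j (D a (D b G))) * Ginv b m := by
          rw [Finset.sum_comm]
          refine Finset.sum_congr rfl fun b _ => ?_
          rw [← Finset.sum_mul]
          congr 1
          exact Finset.sum_comm
  intro i j
  have part1 : (Amat j).map (D i) = (Amat i).map (D j) := by
    ext k m
    simp only [Matrix.map_apply]
    rw [expand1 i j k m, expand1 j i k m]
    congr 1
    · exact Finset.sum_congr rfl fun l _ => by rw [hD i j (D k (D l G))]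
    · exact Finset.sum_congr rfl fun b _ => by rw [key i j k b]
  have part2 : Amat i * Amat j = Amat j * Amat i := by
    ext k m
    rw [expand2 i j k m, expand2 j i k m]
    exact Finset.sum_congr rfl fun b _ => by rw [key i j k b]
  refine ⟨part1, part2, fun q u _ => ?_⟩
  rw [part1, part2, sub_self, sub_self, smul_zero, smul_zero]

end QKStmt11
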